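/- arXiv:1302.6574 — 2 statements merged into one kernel-verified Lean document; each statement's English description precedes it below -/
import Mathlib

section
/- Let 𝒳 and 𝒴 be finite alphabets, P a probability distribution on 𝒳, Q(·|·) a channel from 𝒳 to 𝒴, and Q_⋆ a probability distribution on 𝒴 with Q_⋆(b) > 0 for all b ∈ 𝒴. Set I = I(P,Q) and D = D(PQ‖Q_⋆), where PQ is the output marginal of P through Q. Then for every ε > 0 there exists n₀ such that for all n ≥ n₀ and every x^n ∈ 𝒳^n with ‖P̂_{x^n} − P‖₁ ≤ 1/log₂(n), the following holds: if Y_1, …, Y_n are i.i.d. with distribution Q_⋆, then P( ‖P̂_{x^n,Y^n} − P⊗Q‖₁ ≤ 2/log₂(n) ) ≤ 2^{−n(I + D − ε)}. -/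
open scoped Classical

/-- The empirical distribution (type) of a string `x ∈ 𝒳ⁿ`. -/
noncomputable def empDist {𝒳 : Type*} [Fintype 𝒳] {n : ℕ} (x : Fin n → 𝒳) (a : 𝒳) : ℝ :=
  ((Finset.univ.filter (fun i : Fin n => x i = a)).card : ℝ) / n

/-- The joint type of a pair of strings `(x, y)`:
`P̂_{x,y}(a,b)` is the number of indices `i` with `x_i = a` and `y_i = b`, divided by `n`. -/
noncomputable def jointEmpDist {𝒳 𝒴 : Type*} [Fintype 𝒳] [Fintype 𝒴] {n : ℕ}
    (x : Fin n → 𝒳) (y : Fin n → 𝒴) (a : 𝒳) (b : 𝒴) : ℝ :=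
  ((Finset.univ.filter (fun i : Fin n => x i = a ∧ y i = b)).card : ℝ) / n

/-- The output marginal `(PQ)(b) = Σ_a P(a) Q(b|a)` of `P` through the channel `Q`. -/
noncomputable def outputDist {𝒳 𝒴 : Type*} [Fintype 𝒳] (P : 𝒳 → ℝ) (Q : 𝒳 → 𝒴 → ℝ)
    (b : 𝒴) : ℝ :=
  ∑ a, P a * Q a b

/-- Mutual information
`I(P,Q) = Σ_{a,b} P(a)Q(b|a) log₂( Q(b|a) / (PQ)(b) )`, with the convention that
terms with `P(a)Q(b|a) = 0` contribute `0`. -/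
noncomputable def mutualInfo {𝒳 𝒴 : Type*} [Fintype 𝒳] [Fintype 𝒴]
    (P : 𝒳 → ℝ) (Q : 𝒳 → 𝒴 → ℝ) : ℝ :=
  ∑ a, ∑ b,
    if P a * Q a b = 0 then 0
    else P a * Q a b * Real.logb 2 (Q a b / outputDist P Q b)

/-- Kullback–Leibler divergence `D(P₁‖P₂) = Σ_b P₁(b) log₂(P₁(b)/P₂(b))`,
with the convention `0·log(0/q) = 0`. -/
noncomputable def klDiv {𝒴 : Type*} [Fintype 𝒴] (P₁ P₂ : 𝒴 → ℝ) : ℝ :=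
  ∑ b, if P₁ b = 0 then 0 else P₁ b * Real.logb 2 (P₁ b / P₂ b)

/-! Change of measure. Mixing the channel with `Qstar` gives the strictly positive channel
`Q' = t Q + (1 - t) Qstar`, `t = 2^(-ε/2)`, under which the strings `y` have total mass one.
On the event, the likelihood ratio `∏ Qstar (yᵢ) / Q' (xᵢ, yᵢ)` equals
`2^(-n Σ P̂_{x,y}(a,b) log₂ (Q'(a,b) / Qstar b))`, and since `log₂ (Q' / Qstar)` is bounded and the
joint type is `2 / log₂ n`-close to `P ⊗ Q`, the exponent is eventually at least
`n (Σ P(a) Q(b|a) log₂ (Q(b|a) / Qstar b) - ε)`: the mixing costs `log₂ t = -ε/2`, the deviation of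
the type another `ε/2`. That conditional divergence is `I(P,Q) + D(PQ‖Qstar)`. -/

open Finset Filter Topology Real

section

variable {𝒳 𝒴 : Type*} [Fintype 𝒳] [Fintype 𝒴]

lemma mutualInfo_eq_sum (P : 𝒳 → ℝ) (Q : 𝒳 → 𝒴 → ℝ) :
    mutualInfo P Q = ∑ a, ∑ b, P a * Q a b * logb 2 (Q a b / outputDist P Q b) := by
  refine sum_congr rfl fun a _ => sum_congr rfl fun b _ => ?_
  split_ifs with h <;> simp [h]

lemma klDiv_eq_sum (P₁ P₂ : 𝒴 → ℝ) : klDiv P₁ P₂ = ∑ b, P₁ b * logb 2 (P₁ b / P₂ b) := by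
  refine sum_congr rfl fun b _ => ?_
  split_ifs with h <;> simp [h]

lemma klDiv_outputDist_eq_sum (P : 𝒳 → ℝ) (Q : 𝒳 → 𝒴 → ℝ) (Qstar : 𝒴 → ℝ) :
    klDiv (outputDist P Q) Qstar =
      ∑ a, ∑ b, P a * Q a b * logb 2 (outputDist P Q b / Qstar b) := by
  rw [klDiv_eq_sum, sum_comm]
  exact sum_congr rfl fun b _ => sum_mul _ _ _

lemma mutualInfo_add_klDiv_outputDist {P : 𝒳 → ℝ} {Q : 𝒳 → 𝒴 → ℝ} {Qstar : 𝒴 → ℝ}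
    (hP : ∀ a, 0 ≤ P a) (hQ : ∀ a b, 0 ≤ Q a b) (hQstar : ∀ b, Qstar b ≠ 0) :
    mutualInfo P Q + klDiv (outputDist P Q) Qstar =
      ∑ a, ∑ b, P a * Q a b * logb 2 (Q a b / Qstar b) := by
  rw [mutualInfo_eq_sum, klDiv_outputDist_eq_sum, ← sum_add_distrib]
  refine sum_congr rfl fun a _ => ?_
  rw [← sum_add_distrib]
  refine sum_congr rfl fun b _ => ?_
  rcases eq_or_ne (P a * Q a b) 0 with h | h
  · simp [h]
  have hQab : Q a b ≠ 0 := right_ne_zero_of_mul h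
  have hout : outputDist P Q b ≠ 0 := by
    refine ((mul_nonneg (hP a) (hQ a b)).lt_of_ne' h |>.trans_le ?_).ne'
    exact single_le_sum (fun a' _ => mul_nonneg (hP a') (hQ a' b)) (mem_univ a)
  rw [← mul_add, logb_div hQab hout, logb_div hout (hQstar b), logb_div hQab (hQstar b)]
  ring

lemma sum_mul_logb_add_logb_le {P : 𝒳 → ℝ} {Q Q' : 𝒳 → 𝒴 → ℝ} {Qstar : 𝒴 → ℝ} {t : ℝ}
    (hP : ∀ a, 0 ≤ P a) (hPsum : ∑ a, P a = 1) (hQ : ∀ a b, 0 ≤ Q a b)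
    (hQsum : ∀ a, ∑ b, Q a b = 1) (hQstar : ∀ b, 0 < Qstar b) (ht : 0 < t)
    (hQ' : ∀ a b, t * Q a b ≤ Q' a b) :
    ∑ a, ∑ b, P a * Q a b * logb 2 (Q a b / Qstar b) + logb 2 t ≤
      ∑ a, ∑ b, P a * Q a b * logb 2 (Q' a b / Qstar b) := by
  have hmass : ∑ a, ∑ b, P a * Q a b = 1 := by simp [← mul_sum, hQsum, hPsum]
  calc _ = ∑ a, ∑ b, P a * Q a b * (logb 2 (Q a b / Qstar b) + logb 2 t) := by
        simp only [mul_add, sum_add_distrib, ← sum_mul, hmass, one_mul]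
    _ ≤ _ := by
      refine sum_le_sum fun a _ => sum_le_sum fun b _ => ?_
      rcases eq_or_ne (P a * Q a b) 0 with h | h
      · simp [h]
      have hQab : 0 < Q a b := (hQ a b).lt_of_ne' (right_ne_zero_of_mul h)
      refine mul_le_mul_of_nonneg_left ?_ (mul_nonneg (hP a) (hQ a b))
      rw [← logb_mul (div_pos hQab (hQstar b)).ne' ht.ne']
      refine logb_le_logb_of_le one_lt_two (by have := hQstar b; positivity) ?_
      rw [div_mul_eq_mul_div, mul_comm]
      exact div_le_div_of_nonneg_right (hQ' a b) (hQstar b).le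

lemma sum_comp_eq_mul_sum_jointEmpDist {n : ℕ} (x : Fin n → 𝒳) (y : Fin n → 𝒴)
    (g : 𝒳 → 𝒴 → ℝ) :
    ∑ i, g (x i) (y i) = n * ∑ a, ∑ b, jointEmpDist x y a b * g a b := by
  rcases eq_or_ne n 0 with rfl | hn
  · simp
  rw [← sum_fiberwise univ (fun i => (x i, y i)), Fintype.sum_prod_type, mul_sum]
  refine sum_congr rfl fun a _ => ?_
  rw [mul_sum]
  refine sum_congr rfl fun b _ => ?_
  rw [jointEmpDist, ← mul_assoc, mul_div_cancel₀ _ (Nat.cast_ne_zero.mpr hn), ← nsmul_eq_mul,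
    ← sum_const]
  refine sum_congr (by ext; simp) fun i hi => ?_
  simp only [mem_filter] at hi
  rw [hi.2.1, hi.2.2]

lemma sum_mul_sub_mul_sum_abs_le {ι : Type*} [Fintype ι] {r w g : ι → ℝ} {δ : ℝ}
    (h : ∑ i, |r i - w i| ≤ δ) :
    ∑ i, w i * g i - δ * ∑ i, |g i| ≤ ∑ i, r i * g i := by
  have hterm : ∀ i, w i * g i - δ * |g i| ≤ r i * g i := fun i => by
    have hi : |r i - w i| ≤ δ :=
      (single_le_sum (fun j _ => abs_nonneg (r j - w j)) (mem_univ i)).trans h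
    have := neg_abs_le ((r i - w i) * g i)
    rw [abs_mul] at this
    nlinarith [mul_le_mul_of_nonneg_right hi (abs_nonneg (g i))]
  simpa only [mul_sum, sum_sub_distrib] using sum_le_sum fun i _ => hterm i

lemma mul_sub_le_sum_comp_of_jointEmpDist_near {n : ℕ} {x : Fin n → 𝒳} {y : Fin n → 𝒴}
    {W : 𝒳 → 𝒴 → ℝ} {δ : ℝ} (h : ∑ a, ∑ b, |jointEmpDist x y a b - W a b| ≤ δ)
    (g : 𝒳 → 𝒴 → ℝ) :
    n * (∑ a, ∑ b, W a b * g a b - δ * ∑ a, ∑ b, |g a b|) ≤ ∑ i, g (x i) (y i) := by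
  have hdev := sum_mul_sub_mul_sum_abs_le (g := fun p : 𝒳 × 𝒴 => g p.1 p.2)
    (r := fun p => jointEmpDist x y p.1 p.2) (w := fun p => W p.1 p.2)
    (δ := δ) (by rwa [Fintype.sum_prod_type])
  simp only [Fintype.sum_prod_type] at hdev
  rw [sum_comp_eq_mul_sum_jointEmpDist]
  exact mul_le_mul_of_nonneg_left hdev n.cast_nonneg

lemma prod_le_rpow_neg_mul_prod {ι : Type*} (s : Finset ι) {p q : ι → ℝ}
    (hp : ∀ i ∈ s, 0 < p i) (hq : ∀ i ∈ s, 0 < q i) {c : ℝ}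
    (hc : c ≤ ∑ i ∈ s, logb 2 (q i / p i)) :
    ∏ i ∈ s, p i ≤ 2 ^ (-c) * ∏ i ∈ s, q i := by
  have hratio : ∀ i ∈ s, 0 < q i / p i := fun i hi => div_pos (hq i hi) (hp i hi)
  have h2c : (2 : ℝ) ^ c ≤ (∏ i ∈ s, q i) / ∏ i ∈ s, p i := by
    rw [← prod_div_distrib, ← rpow_logb two_pos (by norm_num) (prod_pos hratio),
      logb_prod _ _ fun i hi => (hratio i hi).ne']
    exact rpow_le_rpow_of_exponent_le one_le_two hc
  rw [le_div_iff₀ (prod_pos hp)] at h2c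
  rw [rpow_neg zero_le_two, ← div_eq_inv_mul, le_div_iff₀ (by positivity)]
  linarith

lemma sum_ite_le_of_le_mul {Ω : Type*} [Fintype Ω] (A : Ω → Prop) [DecidablePred A]
    {f g : Ω → ℝ} {K : ℝ} (hK : 0 ≤ K) (hg : ∀ ω, 0 ≤ g ω) (hg1 : ∑ ω, g ω = 1)
    (hfg : ∀ ω, A ω → f ω ≤ K * g ω) :
    ∑ ω, (if A ω then f ω else 0) ≤ K :=
  calc _ ≤ ∑ ω, K * g ω := sum_le_sum fun ω _ => by
          split_ifs with h
          exacts [hfg ω h, mul_nonneg hK (hg ω)]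
    _ = K := by rw [← mul_sum, hg1, mul_one]

lemma sum_pi_prod_eq_one {ι α : Type*} [Fintype ι] [DecidableEq ι] [Fintype α]
    (W : ι → α → ℝ) (hW : ∀ i, ∑ a, W i a = 1) : ∑ y : ι → α, ∏ i, W i (y i) = 1 := by
  rw [← Fintype.prod_sum]
  simp [hW]

lemma eventually_div_logb_mul_le (C G : ℝ) {c : ℝ} (hc : 0 < c) :
    ∀ᶠ n : ℕ in atTop, C / logb 2 n * G ≤ c := by
  have := ((tendsto_const_nhds (x := C)).div_atTop
    ((tendsto_logb_atTop one_lt_two).comp tendsto_natCast_atTop_atTop)).mul_const G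
  rw [zero_mul] at this
  exact this.eventually_le_const hc

end

/-- With `I = I(P,Q)` and `D = D(PQ‖Q⋆)`, for every `ε > 0` there is `n₀`
such that for all `n ≥ n₀` and every `x^n` with `‖P̂_{x^n} − P‖₁ ≤ 1/log₂ n`:
if `Y_1, …, Y_n` are i.i.d. with distribution `Q⋆`, then the probability that
`‖P̂_{x^n,Y^n} − P⊗Q‖₁ ≤ 2/log₂ n` is at most `2^{−n(I+D−ε)}`. -/
theorem stmt_5 {𝒳 𝒴 : Type*} [Fintype 𝒳] [Fintype 𝒴]
    (P : 𝒳 → ℝ) (hP : ∀ a, 0 ≤ P a) (hPsum : ∑ a, P a = 1)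
    (Q : 𝒳 → 𝒴 → ℝ) (hQ : ∀ a b, 0 ≤ Q a b) (hQsum : ∀ a, ∑ b, Q a b = 1)
    (Qstar : 𝒴 → ℝ) (hQstar : ∀ b, 0 < Qstar b) (hQstarsum : ∑ b, Qstar b = 1)
    (ε : ℝ) (hε : 0 < ε) :
    ∃ n₀ : ℕ, ∀ n ≥ n₀, ∀ x : Fin n → 𝒳,
      (∑ a, |empDist x a - P a| ≤ 1 / Real.logb 2 n) →
      (∑ y : Fin n → 𝒴,
          if ∑ a, ∑ b, |jointEmpDist x y a b - P a * Q a b| ≤ 2 / Real.logb 2 n then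
            ∏ i, Qstar (y i)
          else 0) ≤
        (2 : ℝ) ^ (-(n : ℝ) * (mutualInfo P Q + klDiv (outputDist P Q) Qstar - ε)) := by
  set t : ℝ := 2 ^ (-(ε / 2)) with ht
  have ht0 : 0 < t := by positivity
  have ht1 : t < 1 := rpow_lt_one_of_one_lt_of_neg one_lt_two (by linarith)
  set Q' : 𝒳 → 𝒴 → ℝ := fun a b => t * Q a b + (1 - t) * Qstar b
  have hQ'pos : ∀ a b, 0 < Q' a b := fun a b =>
    add_pos_of_nonneg_of_pos (mul_nonneg ht0.le (hQ a b)) (mul_pos (by linarith) (hQstar b))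
  have hQ'sum : ∀ a, ∑ b, Q' a b = 1 := fun a => by
    simp only [Q', sum_add_distrib, ← mul_sum, hQsum, hQstarsum]
    ring
  set h : 𝒳 → 𝒴 → ℝ := fun a b => logb 2 (Q' a b / Qstar b)
  set S := ∑ a, ∑ b, P a * Q a b * logb 2 (Q a b / Qstar b)
  have hmean : S - ε / 2 ≤ ∑ a, ∑ b, P a * Q a b * h a b := by
    have := sum_mul_logb_add_logb_le hP hPsum hQ hQsum hQstar ht0 (Q' := Q')
      fun a b => le_add_of_nonneg_right (mul_pos (by linarith) (hQstar b)).le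
    rw [ht, logb_rpow two_pos (by norm_num)] at this
    linarith
  set G := ∑ a, ∑ b, |h a b|
  obtain ⟨n₀, hn₀⟩ := eventually_atTop.mp (eventually_div_logb_mul_le 2 G (half_pos hε))
  refine ⟨n₀, fun n hn x _ => ?_⟩
  rw [mutualInfo_add_klDiv_outputDist hP hQ fun b => (hQstar b).ne', neg_mul]
  refine sum_ite_le_of_le_mul _ (by positivity) (fun y => prod_nonneg fun i _ => (hQ'pos _ _).le)
    (sum_pi_prod_eq_one (fun i => Q' (x i)) fun i => hQ'sum (x i)) fun y hy => ?_
  refine prod_le_rpow_neg_mul_prod _ (fun i _ => hQstar _) (fun i _ => hQ'pos _ _) ?_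
  calc (n : ℝ) * (S - ε) ≤ n * (∑ a, ∑ b, P a * Q a b * h a b - 2 / logb 2 n * G) :=
        mul_le_mul_of_nonneg_left (by linarith [hn₀ n hn]) n.cast_nonneg
    _ ≤ ∑ i, h (x i) (y i) := mul_sub_le_sum_comp_of_jointEmpDist_near hy h
end

section
/- Let 𝒳 and 𝒴 be finite alphabets, P a probability distribution on 𝒳, and Q(·|·) a channel from 𝒳 to 𝒴; set I = I(P,Q). Then for every ε > 0 there exists n₀ such that for all n ≥ n₀ and every fixed string y^n ∈ 𝒴^n, the following holds: if X_1, …, X_n are i.i.d. with distribution P, then P( ‖P̂_{X^n,y^n} − P⊗Q‖₁ ≤ 2/log₂(n) ) ≤ 2^{−n(I − ε)}. -/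
open scoped Classical

/-!
Change of measure. Smooth the information density to `iη(a;b) = log₂ ((Q(b|a) + η) / ((PQ)(b) + η))`,
which stays bounded where `Q` vanishes, and tilt `P` into the reverse channel
`Wη(a|b) = P(a) (Q(b|a) + η) / ((PQ)(b) + η)`, so that `P(a) = Wη(a|b) 2^{-iη(a;b)}`. Hence
`Pⁿ(x) = Wⁿ(x|y) 2^{-n E[iη]}`, the expectation being over the joint type of `(x, y)`. On the
typical set this expectation is within `(2 / log₂ n) max |iη|` of `E_{P⊗Q}[iη]`, which tends to
`I(P,Q)` as `η → 0`; summing `Wⁿ(x|y)` over all `x` gives `1`.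
-/

open Filter Topology Finset

noncomputable def smoothedInfoDensity {𝒳 𝒴 : Type*} [Fintype 𝒳] (P : 𝒳 → ℝ)
    (Q : 𝒳 → 𝒴 → ℝ) (η : ℝ) (a : 𝒳) (b : 𝒴) : ℝ :=
  Real.logb 2 ((Q a b + η) / (outputDist P Q b + η))

noncomputable def smoothedPosterior {𝒳 𝒴 : Type*} [Fintype 𝒳] (P : 𝒳 → ℝ)
    (Q : 𝒳 → 𝒴 → ℝ) (η : ℝ) (a : 𝒳) (b : 𝒴) : ℝ :=
  P a * (Q a b + η) / (outputDist P Q b + η)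

section Channel

variable {𝒳 𝒴 : Type*} [Fintype 𝒳] {P : 𝒳 → ℝ} {Q : 𝒳 → 𝒴 → ℝ}

lemma outputDist_nonneg (hP : ∀ a, 0 ≤ P a) (hQ : ∀ a b, 0 ≤ Q a b) (b : 𝒴) :
    0 ≤ outputDist P Q b :=
  sum_nonneg fun a _ => mul_nonneg (hP a) (hQ a b)

lemma mul_le_outputDist (hP : ∀ a, 0 ≤ P a) (hQ : ∀ a b, 0 ≤ Q a b) (a : 𝒳) (b : 𝒴) :
    P a * Q a b ≤ outputDist P Q b :=
  single_le_sum (f := fun a => P a * Q a b) (fun a _ => mul_nonneg (hP a) (hQ a b)) (mem_univ a)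

lemma smoothedPosterior_nonneg (hP : ∀ a, 0 ≤ P a) (hQ : ∀ a b, 0 ≤ Q a b) {η : ℝ}
    (hη : 0 < η) (a : 𝒳) (b : 𝒴) : 0 ≤ smoothedPosterior P Q η a b := by
  have := outputDist_nonneg hP hQ b
  have := hP a
  have := hQ a b
  unfold smoothedPosterior
  positivity

lemma sum_smoothedPosterior (hP : ∀ a, 0 ≤ P a) (hPsum : ∑ a, P a = 1)
    (hQ : ∀ a b, 0 ≤ Q a b) {η : ℝ} (hη : 0 < η) (b : 𝒴) :
    ∑ a, smoothedPosterior P Q η a b = 1 := by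
  have : 0 < outputDist P Q b + η := by linarith [outputDist_nonneg hP hQ b]
  simp only [smoothedPosterior, ← sum_div, mul_add, sum_add_distrib, ← sum_mul, hPsum]
  rw [one_mul]
  exact div_self this.ne'

lemma smoothedPosterior_mul_rpow_neg_smoothedInfoDensity (hP : ∀ a, 0 ≤ P a)
    (hQ : ∀ a b, 0 ≤ Q a b) {η : ℝ} (hη : 0 < η) (a : 𝒳) (b : 𝒴) :
    smoothedPosterior P Q η a b * 2 ^ (-smoothedInfoDensity P Q η a b) = P a := by
  have := outputDist_nonneg hP hQ b
  have := hQ a b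
  rw [smoothedPosterior, smoothedInfoDensity, Real.rpow_neg zero_le_two,
    Real.rpow_logb two_pos (by norm_num) (by positivity)]
  field_simp

lemma tendsto_mul_smoothedInfoDensity (hP : ∀ a, 0 ≤ P a) (hQ : ∀ a b, 0 ≤ Q a b)
    (a : 𝒳) (b : 𝒴) :
    Tendsto (fun η => P a * Q a b * smoothedInfoDensity P Q η a b) (𝓝 0)
      (𝓝 (if P a * Q a b = 0 then 0
        else P a * Q a b * Real.logb 2 (Q a b / outputDist P Q b))) := by
  split_ifs with h
  · simp [h]
  have hPQ : 0 < P a * Q a b := (mul_nonneg (hP a) (hQ a b)).lt_of_ne' h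
  have hQab : Q a b ≠ 0 := right_ne_zero_of_mul h
  have hout : outputDist P Q b ≠ 0 := (hPQ.trans_le (mul_le_outputDist hP hQ a b)).ne'
  have hcont : ContinuousAt (fun η : ℝ => (Q a b + η) / (outputDist P Q b + η)) 0 :=
    (continuousAt_const.add continuousAt_id).div (continuousAt_const.add continuousAt_id)
      (by simpa using hout)
  unfold smoothedInfoDensity
  simpa using ((hcont.logb (by simp [hQab, hout])).const_mul (P a * Q a b)).tendsto

variable [Fintype 𝒴]

lemma tendsto_sum_mul_smoothedInfoDensity (hP : ∀ a, 0 ≤ P a) (hQ : ∀ a b, 0 ≤ Q a b) :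
    Tendsto (fun η => ∑ a, ∑ b, P a * Q a b * smoothedInfoDensity P Q η a b) (𝓝 0)
      (𝓝 (mutualInfo P Q)) :=
  tendsto_finsetSum _ fun a _ => tendsto_finsetSum _ fun b _ =>
    tendsto_mul_smoothedInfoDensity hP hQ a b

lemma exists_pos_mutualInfo_sub_le_sum_mul_smoothedInfoDensity (hP : ∀ a, 0 ≤ P a)
    (hQ : ∀ a b, 0 ≤ Q a b) {ε : ℝ} (hε : 0 < ε) :
    ∃ η > 0, mutualInfo P Q - ε ≤ ∑ a, ∑ b, P a * Q a b * smoothedInfoDensity P Q η a b := by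
  have hev := ((tendsto_sum_mul_smoothedInfoDensity hP hQ).mono_left
    (nhdsWithin_le_nhds (s := Set.Ioi 0))).eventually
    (eventually_ge_nhds (sub_lt_self _ hε))
  obtain ⟨η, hη, hpos⟩ := (hev.and self_mem_nhdsWithin).exists
  exact ⟨η, hpos, hη⟩

end Channel

section JointType

variable {𝒳 𝒴 : Type*} [Fintype 𝒳] [Fintype 𝒴] {n : ℕ}

lemma natCast_mul_sum_jointEmpDist_mul (x : Fin n → 𝒳) (y : Fin n → 𝒴) (f : 𝒳 → 𝒴 → ℝ) :
    (n : ℝ) * ∑ a, ∑ b, jointEmpDist x y a b * f a b = ∑ i, f (x i) (y i) := by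
  rcases eq_or_ne n 0 with rfl | hn
  · simp
  rw [← sum_fiberwise' univ (fun i => (x i, y i)) fun p => f p.1 p.2, Fintype.sum_prod_type,
    mul_sum]
  refine sum_congr rfl fun a _ => ?_
  rw [mul_sum]
  refine sum_congr rfl fun b _ => ?_
  simp only [sum_const, nsmul_eq_mul, Prod.mk.injEq, jointEmpDist]
  field_simp

lemma prod_eq_prod_smoothedPosterior_mul_rpow {P : 𝒳 → ℝ} {Q : 𝒳 → 𝒴 → ℝ}
    (hP : ∀ a, 0 ≤ P a) (hQ : ∀ a b, 0 ≤ Q a b) {η : ℝ} (hη : 0 < η)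
    (x : Fin n → 𝒳) (y : Fin n → 𝒴) :
    ∏ i, P (x i) = (∏ i, smoothedPosterior P Q η (x i) (y i)) *
      2 ^ (-((n : ℝ) * ∑ a, ∑ b, jointEmpDist x y a b * smoothedInfoDensity P Q η a b)) := by
  rw [natCast_mul_sum_jointEmpDist_mul, ← sum_neg_distrib, Real.rpow_sum_of_pos two_pos,
    ← prod_mul_distrib]
  exact prod_congr rfl fun i _ =>
    (smoothedPosterior_mul_rpow_neg_smoothedInfoDensity hP hQ hη _ _).symm

end JointType

lemma sum_ite_prod_le_of_le_mul_prod {𝒳 𝒴 : Type*} [Fintype 𝒳] {n : ℕ}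
    {S : (Fin n → 𝒳) → Prop} [DecidablePred S] {P : 𝒳 → ℝ} {W : 𝒳 → 𝒴 → ℝ}
    (y : Fin n → 𝒴) (hW : ∀ a b, 0 ≤ W a b) (hWsum : ∀ b, ∑ a, W a b = 1) {t : ℝ}
    (ht : 0 ≤ t) (h : ∀ x, S x → ∏ i, P (x i) ≤ t * ∏ i, W (x i) (y i)) :
    ∑ x, (if S x then ∏ i, P (x i) else 0) ≤ t :=
  calc ∑ x, (if S x then ∏ i, P (x i) else 0)
      ≤ ∑ x : Fin n → 𝒳, t * ∏ i, W (x i) (y i) := sum_le_sum fun x _ => by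
        split_ifs with hx
        · exact h x hx
        · exact mul_nonneg ht (prod_nonneg fun i _ => hW _ _)
    _ = t := by
        rw [← mul_sum, ← Fintype.prod_sum fun i a => W a (y i)]
        simp [hWsum]

lemma sum_sum_mul_sub_le {α β : Type*} [Fintype α] [Fintype β] (f g c : α → β → ℝ) {M : ℝ}
    (hM : ∀ a b, |c a b| ≤ M) :
    ∑ a, ∑ b, g a b * c a b - (∑ a, ∑ b, |f a b - g a b|) * M ≤ ∑ a, ∑ b, f a b * c a b := by
  simp only [sum_mul, ← sum_sub_distrib]
  refine sum_le_sum fun a _ => sum_le_sum fun b _ => ?_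
  have : (g a b - f a b) * c a b ≤ |f a b - g a b| * M :=
    calc (g a b - f a b) * c a b ≤ |f a b - g a b| * |c a b| := by
          rw [abs_sub_comm, ← abs_mul]; exact le_abs_self _
      _ ≤ |f a b - g a b| * M := mul_le_mul_of_nonneg_left (hM a b) (abs_nonneg _)
  linarith

lemma tendsto_two_div_logb_natCast : Tendsto (fun n : ℕ => 2 / Real.logb 2 n) atTop (𝓝 0) :=
  tendsto_const_nhds.div_atTop
    ((Real.tendsto_logb_atTop one_lt_two).comp tendsto_natCast_atTop_atTop)

theorem stmt_6_general {𝒳 𝒴 : Type*} [Fintype 𝒳] [Fintype 𝒴]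
    (P : 𝒳 → ℝ) (hP : ∀ a, 0 ≤ P a) (hPsum : ∑ a, P a = 1)
    (Q : 𝒳 → 𝒴 → ℝ) (hQ : ∀ a b, 0 ≤ Q a b)
    (ε : ℝ) (hε : 0 < ε) :
    ∃ n₀ : ℕ, ∀ n ≥ n₀, ∀ y : Fin n → 𝒴,
      (∑ x : Fin n → 𝒳,
          if ∑ a, ∑ b, |jointEmpDist x y a b - P a * Q a b| ≤ 2 / Real.logb 2 n then
            ∏ i, P (x i)
          else 0) ≤
        (2 : ℝ) ^ (-(n : ℝ) * (mutualInfo P Q - ε)) := by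
  obtain ⟨η, hη, hI⟩ :=
    exists_pos_mutualInfo_sub_le_sum_mul_smoothedInfoDensity hP hQ (half_pos hε)
  obtain ⟨M, hM⟩ :=
    (Set.finite_range fun p : 𝒳 × 𝒴 => |smoothedInfoDensity P Q η p.1 p.2|).bddAbove
  set M₀ := max M 0
  have hM₀ : ∀ a b, |smoothedInfoDensity P Q η a b| ≤ M₀ :=
    fun a b => le_max_of_le_left (hM ⟨(a, b), rfl⟩)
  obtain ⟨n₀, hn₀⟩ := eventually_atTop.mp <|
    (tendsto_two_div_logb_natCast.mul_const M₀).eventually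
      (eventually_le_nhds (show 0 * M₀ < ε / 2 by simpa using hε))
  refine ⟨n₀, fun n hn y => sum_ite_prod_le_of_le_mul_prod y (smoothedPosterior_nonneg hP hQ hη)
    (sum_smoothedPosterior hP hPsum hQ hη) (by positivity) fun x hx => ?_⟩
  have hdev := sum_sum_mul_sub_le (jointEmpDist x y) (fun a b => P a * Q a b) _ hM₀
  have hsmall := (mul_le_mul_of_nonneg_right hx (le_max_right M 0)).trans (hn₀ n hn)
  rw [prod_eq_prod_smoothedPosterior_mul_rpow hP hQ hη x y, mul_comm]
  refine mul_le_mul_of_nonneg_right (Real.rpow_le_rpow_of_exponent_le one_le_two ?_)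
    (prod_nonneg fun i _ => smoothedPosterior_nonneg hP hQ hη _ _)
  rw [neg_mul, neg_le_neg_iff]
  exact mul_le_mul_of_nonneg_left (by linarith) n.cast_nonneg

/-- With `I = I(P,Q)`, for every `ε > 0` there is `n₀` such that for all
`n ≥ n₀` and every fixed `y^n ∈ 𝒴^n`: if `X_1, …, X_n` are i.i.d. with distribution `P`,
then the probability that `‖P̂_{X^n,y^n} − P⊗Q‖₁ ≤ 2/log₂ n` is at most `2^{−n(I−ε)}`. -/
theorem stmt_6 {𝒳 𝒴 : Type*} [Fintype 𝒳] [Fintype 𝒴]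
    (P : 𝒳 → ℝ) (hP : ∀ a, 0 ≤ P a) (hPsum : ∑ a, P a = 1)
    (Q : 𝒳 → 𝒴 → ℝ) (hQ : ∀ a b, 0 ≤ Q a b) (hQsum : ∀ a, ∑ b, Q a b = 1)
    (ε : ℝ) (hε : 0 < ε) :
    ∃ n₀ : ℕ, ∀ n ≥ n₀, ∀ y : Fin n → 𝒴,
      (∑ x : Fin n → 𝒳,
          if ∑ a, ∑ b, |jointEmpDist x y a b - P a * Q a b| ≤ 2 / Real.logb 2 n then
            ∏ i, P (x i)
          else 0) ≤
        (2 : ℝ) ^ (-(n : ℝ) * (mutualInfo P Q - ε)) :=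
  stmt_6_general P hP hPsum Q hQ ε hε
end
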